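/- arXiv:math/0006225 — 6 statements merged into one kernel-verified Lean document; each statement's English description precedes it below -/
import Mathlib

section
/- Let n, d be positive integers with n > d and let A be an n × n matrix with entries in {0,1} such that every row of A has exactly d ones and every column of A has exactly d ones. Let Γ_A be the simple graph on the column indices of A in which two distinct columns j, k are adjacent if and only if the number of rows i with A_{i,j} = A_{i,k} = 1 equals d − 1. If Γ_A is connected, then no two distinct rows of A are equal; equivalently, distinct rows have distinct supports. -/
/-
If two distinct rows `i₁ ≠ i₂` of `A` coincide, their common support `S` is closed under
adjacency in `Γ_A`: for `j ∈ S` and `k ∉ S`, column `j` contains both rows `i₁, i₂`, while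
neither of them is counted among the rows common to columns `j` and `k`, so columns `j` and `k`
share at most `d - 2` rows. A connected graph has no proper nonempty closed vertex set, yet
`S` has `d` elements with `0 < d < n`.
-/

open Finset

/-- The graph `Γ_A` on the column indices of a 0/1-matrix `A` (encoded with `Bool` entries):
two distinct columns `j, k` are adjacent iff the number of rows `i` with
`A i j = A i k = 1` equals `d - 1`. -/
def gammaA (n d : ℕ) (A : Fin n → Fin n → Bool) : SimpleGraph (Fin n) where
  Adj j k := j ≠ k ∧ (univ.filter (fun i => A i j ∧ A i k)).card = d - 1
  symm := by
    constructor
    rintro j k ⟨hjk, hcard⟩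
    refine ⟨hjk.symm, ?_⟩
    rw [← hcard]
    congr 1
    ext i
    simp [and_comm]
  loopless := ⟨fun j h => h.1 rfl⟩

theorem SimpleGraph.Walk.mem_of_adj_closed {V : Type*} {G : SimpleGraph V} {s : Set V}
    (hs : ∀ ⦃u v⦄, G.Adj u v → u ∈ s → v ∈ s) {u v : V} (w : G.Walk u v) (hu : u ∈ s) :
    v ∈ s := by
  induction w with
  | nil => exact hu
  | cons huv _ ih => exact ih (hs huv hu)

theorem SimpleGraph.Connected.mem_of_adj_closed {V : Type*} {G : SimpleGraph V}
    (hG : G.Connected) {s : Set V} (hs : ∀ ⦃u v⦄, G.Adj u v → u ∈ s → v ∈ s) {u : V}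
    (hu : u ∈ s) (v : V) : v ∈ s :=
  (hG u v).elim fun w => w.mem_of_adj_closed hs hu

section EqualRows

variable {ι κ : Type*} [Fintype ι] [DecidableEq ι] {A : ι → κ → Bool} {i₁ i₂ : ι}

theorem card_filter_and_add_two_le_of_rows_eq (hne : i₁ ≠ i₂) (heq : ∀ j, A i₁ j = A i₂ j)
    {j k : κ} (hj : A i₁ j) (hk : ¬ A i₁ k) :
    #{i | A i j ∧ A i k} + 2 ≤ #{i | A i j} := by
  set T : Finset ι := {i | A i j ∧ A i k}
  have hi₁ : i₁ ∉ T := by simp [T, hk]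
  have hi₂ : i₂ ∉ T := by simp [T, ← heq k, hk]
  calc #T + 2 = #(insert i₁ (insert i₂ T)) := by
        rw [card_insert_of_notMem (by simp [hne, hi₁]), card_insert_of_notMem hi₂]
    _ ≤ #{i | A i j} := by
        refine card_le_card fun i hi => ?_
        simp only [mem_insert] at hi
        rcases hi with rfl | rfl | hi
        · simpa using hj
        · simpa [← heq j] using hj
        · exact mem_filter.mpr ⟨mem_univ i, (mem_filter.mp hi).2.1⟩

theorem gammaA_adj_closed_of_rows_eq {n d : ℕ} {A : Fin n → Fin n → Bool} {i₁ i₂ : Fin n}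
    (hcol : ∀ j : Fin n, #{i | A i j} = d) (hne : i₁ ≠ i₂) (heq : ∀ j, A i₁ j = A i₂ j) :
    ∀ ⦃j k⦄, (gammaA n d A).Adj j k → A i₁ j → A i₁ k := by
  intro j k ⟨_, hcard⟩ hj
  by_contra hk
  have := card_filter_and_add_two_le_of_rows_eq hne heq hj hk
  rw [hcard, hcol j] at this
  omega

end EqualRows

theorem stmt1_general (n d : ℕ) (hd : 0 < d) (hnd : d < n)
    (A : Fin n → Fin n → Bool)
    (hrow : ∀ i : Fin n, (univ.filter (fun j => A i j)).card = d)
    (hcol : ∀ j : Fin n, (univ.filter (fun i => A i j)).card = d)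
    (hconn : (gammaA n d A).Connected) :
    ∀ i₁ i₂ : Fin n, (∀ j, A i₁ j = A i₂ j) → i₁ = i₂ := by
  intro i₁ i₂ heq
  by_contra hne
  obtain ⟨j, hj⟩ : ({j | A i₁ j} : Finset (Fin n)).Nonempty := by
    rw [← card_pos, hrow]
    exact hd
  obtain ⟨k, -, hk⟩ : ∃ k ∈ (univ : Finset (Fin n)), k ∉ ({j | A i₁ j} : Finset (Fin n)) := by
    refine exists_mem_notMem_of_card_lt_card ?_
    rw [hrow, card_univ, Fintype.card_fin]
    exact hnd
  have hsupp : ∀ k, A i₁ k := hconn.mem_of_adj_closed (s := {k | A i₁ k})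
    (gammaA_adj_closed_of_rows_eq hcol hne heq) (mem_filter.mp hj).2
  exact hk (mem_filter.mpr ⟨mem_univ k, hsupp k⟩)

/-- If every row and every column of an `n × n` 0/1-matrix `A` has exactly `d` ones,
`n > d`, and `Γ_A` is connected, then no two distinct rows of `A` are equal. -/
theorem stmt1 (n d : ℕ) (hn : 0 < n) (hd : 0 < d) (hnd : d < n)
    (A : Fin n → Fin n → Bool)
    (hrow : ∀ i : Fin n, (univ.filter (fun j => A i j)).card = d)
    (hcol : ∀ j : Fin n, (univ.filter (fun i => A i j)).card = d)
    (hconn : (gammaA n d A).Connected) :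
    ∀ i₁ i₂ : Fin n, (∀ j, A i₁ j = A i₂ j) → i₁ = i₂ :=
  stmt1_general n d hd hnd A hrow hcol hconn
end

section
/- Let n, d be positive integers and let A be an n × n matrix with entries in {0,1} such that every row of A has exactly d ones and every column of A has exactly d ones. Let Γ_A be the simple graph on the column indices of A in which two distinct columns j, k are adjacent if and only if the number of rows i with A_{i,j} = A_{i,k} = 1 equals d − 1. Assume Γ_A is connected. Then for every nonempty set S of column indices, the number of rows i for which A_{i,j} = 1 for at least one j ∈ S is at least min{n, d + |S| − 1}. -/
open Finset

/-!
Let `R` be a proper set of rows and `T(R)` the set of columns whose support lies in `R`.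
If `j ∈ T(R)` and `k ∉ T(R)` are adjacent in `Γ_A`, the support of `k` has at most one row
outside the support of `j`, so adding that single row to `R` adds `k` to `T(R)`. Since `Γ_A`
is connected such an edge exists while `T(R)` is nonempty and `R` is proper, and iterating until
`R` becomes full yields `d + |T(R)| ≤ |R| + 1`; the last step uses that a row outside `R` has
its `d` ones outside `T(R)`. Take `R` = the rows meeting `S`, so that `S ⊆ T(R)`.
-/

theorem Finset.exists_subset_insert_of_card_sdiff_le_one {α : Type*} [DecidableEq α]
    {s t R : Finset α} (hts : #(t \ s) ≤ 1) (hsR : s ⊆ R) (htR : ¬ t ⊆ R) :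
    ∃ i ∉ R, t ⊆ insert i R := by
  obtain ⟨i, hi⟩ := sdiff_nonempty.2 htR
  have hsingle : t \ R = {i} := by
    refine eq_singleton_iff_unique_mem.2 ⟨hi, fun i' hi' => ?_⟩
    have hsub : t \ R ⊆ t \ s := sdiff_subset_sdiff subset_rfl hsR
    exact card_le_one.1 hts i' (hsub hi') i (hsub hi)
  refine ⟨i, (mem_sdiff.1 hi).2, fun x hx => ?_⟩
  by_cases hxR : x ∈ R
  · exact mem_insert_of_mem hxR
  · have hxi : x ∈ t \ R := mem_sdiff.2 ⟨hx, hxR⟩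
    rw [hsingle, mem_singleton] at hxi
    exact hxi ▸ mem_insert_self x R

namespace BoolMatrix

variable {α : Type*} [Fintype α] (A : α → α → Bool)

def rowSupport (i : α) : Finset α := univ.filter (fun j => A i j)

def colSupport (j : α) : Finset α := univ.filter (fun i => A i j)

variable [DecidableEq α]

def coveredCols (R : Finset α) : Finset α := univ.filter (fun j => colSupport A j ⊆ R)

variable {A}

theorem mem_coveredCols {R : Finset α} {j : α} : j ∈ coveredCols A R ↔ colSupport A j ⊆ R := by
  simp [coveredCols]

theorem coveredCols_mono {R R' : Finset α} (h : R ⊆ R') : coveredCols A R ⊆ coveredCols A R' :=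
  fun _ hj => mem_coveredCols.2 ((mem_coveredCols.1 hj).trans h)

theorem disjoint_rowSupport_coveredCols {R : Finset α} {i : α} (hi : i ∉ R) :
    Disjoint (rowSupport A i) (coveredCols A R) :=
  disjoint_left.2 fun j hij hjR =>
    hi (mem_coveredCols.1 hjR (by simpa [colSupport, rowSupport] using hij))

theorem card_rowSupport_add_card_coveredCols_le {R : Finset α} {i : α} (hi : i ∉ R) :
    #(rowSupport A i) + #(coveredCols A R) ≤ Fintype.card α := by
  rw [← card_union_of_disjoint (disjoint_rowSupport_coveredCols hi)]
  exact card_le_univ _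

theorem add_card_coveredCols_le {G : SimpleGraph α} (hG : G.Connected)
    (hadj : ∀ j k, G.Adj j k → #(colSupport A k \ colSupport A j) ≤ 1)
    {d : ℕ} (hd : 0 < d) (hrow : ∀ i, d ≤ #(rowSupport A i))
    (R : Finset α) (hR : R ≠ univ) (hne : (coveredCols A R).Nonempty) :
    d + #(coveredCols A R) ≤ #R + 1 := by
  obtain ⟨i₁, hi₁⟩ : ∃ i, i ∉ R := by simpa [eq_univ_iff_forall] using hR
  obtain ⟨k₀, hk₀⟩ := card_pos.1 (hd.trans_le (hrow i₁))
  obtain ⟨j₀, hj₀⟩ := hne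
  obtain ⟨e, -, hj, hk⟩ := (hG.preconnected j₀ k₀).some.exists_boundary_dart
    (coveredCols A R : Set α) hj₀ (disjoint_left.1 (disjoint_rowSupport_coveredCols hi₁) hk₀)
  obtain ⟨i, hiR, hki⟩ := exists_subset_insert_of_card_sdiff_le_one (hadj _ _ e.adj)
    (mem_coveredCols.1 hj) (mt mem_coveredCols.2 hk)
  have hgrow : insert e.snd (coveredCols A R) ⊆ coveredCols A (insert i R) :=
    insert_subset (mem_coveredCols.2 hki) (coveredCols_mono (subset_insert i R))
  have hcard_grow := card_le_card hgrow
  rw [card_insert_of_notMem hk] at hcard_grow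
  have hcard_insert : #(insert i R) = #R + 1 := card_insert_of_notMem hiR
  by_cases hfull : insert i R = univ
  · have hlast := card_rowSupport_add_card_coveredCols_le (A := A) hiR
    rw [← hcard_insert, hfull, card_univ]
    linarith [hrow i]
  · have ih := add_card_coveredCols_le hG hadj hd hrow (insert i R) hfull ⟨e.snd, hgrow
      (mem_insert_self _ _)⟩
    omega
termination_by Fintype.card α - #R
decreasing_by
  have := card_le_univ (insert i R)
  omega

end BoolMatrix

open BoolMatrix in
theorem card_colSupport_sdiff_le_one_of_gammaA_adj {n d : ℕ} {A : Fin n → Fin n → Bool}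
    {j k : Fin n} (hadj : (gammaA n d A).Adj j k) (hk : #(colSupport A k) = d) :
    #(colSupport A k \ colSupport A j) ≤ 1 := by
  have hinter : colSupport A j ∩ colSupport A k = univ.filter (fun i => A i j ∧ A i k) := by
    ext i; simp [colSupport]
  rw [card_sdiff, hinter, hadj.2, hk]
  omega

open BoolMatrix in
theorem stmt2_general (n d : ℕ) (hd : 0 < d)
    (A : Fin n → Fin n → Bool)
    (hrow : ∀ i : Fin n, (univ.filter (fun j => A i j)).card = d)
    (hcol : ∀ j : Fin n, (univ.filter (fun i => A i j)).card = d)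
    (hconn : (gammaA n d A).Connected) :
    ∀ S : Finset (Fin n), S.Nonempty →
      min n (d + S.card - 1) ≤ (univ.filter (fun i => ∃ j ∈ S, A i j)).card := by
  intro S hS
  set R := univ.filter (fun i => ∃ j ∈ S, A i j)
  have hSR : S ⊆ coveredCols A R := fun j hj => mem_coveredCols.2 fun i hi =>
    mem_filter.2 ⟨mem_univ i, j, hj, (mem_filter.1 hi).2⟩
  by_cases hfull : R = univ
  · rw [hfull, card_univ, Fintype.card_fin]
    exact min_le_left _ _
  · have key := add_card_coveredCols_le hconn
      (fun _ k h => card_colSupport_sdiff_le_one_of_gammaA_adj h (hcol k)) hd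
      (fun i => (hrow i).ge) R hfull (hS.mono hSR)
    have := card_le_card hSR
    omega

/-- If every row and every column of an `n × n` 0/1-matrix `A` has exactly `d` ones
and `Γ_A` is connected, then for every nonempty set `S` of columns, the number of rows
having a one in at least one column of `S` is at least `min n (d + |S| - 1)`. -/
theorem stmt2 (n d : ℕ) (hn : 0 < n) (hd : 0 < d)
    (A : Fin n → Fin n → Bool)
    (hrow : ∀ i : Fin n, (univ.filter (fun j => A i j)).card = d)
    (hcol : ∀ j : Fin n, (univ.filter (fun i => A i j)).card = d)
    (hconn : (gammaA n d A).Connected) :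
    ∀ S : Finset (Fin n), S.Nonempty →
      min n (d + S.card - 1) ≤ (univ.filter (fun i => ∃ j ∈ S, A i j)).card :=
  stmt2_general n d hd A hrow hcol hconn
end

section
/- Let n, d be integers with d ≥ 2 and let A be an n × n matrix with entries in {0,1} such that every row of A has exactly d ones and every column of A has exactly d ones. Let Γ_A be the simple graph on the column indices of A in which two distinct columns j, k are adjacent if and only if the number of rows i with A_{i,j} = A_{i,k} = 1 equals d − 1. Assume that Γ_A is connected and that for every row i of A, the subgraph of Γ_A induced by the support of row i is connected. Then Γ_A is not a tree. -/
open Finset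

/-! Count the pairs (edge `e`, row `i`) with `e` inside the support of row `i`. An edge `jk` of
`Γ_A` lies in exactly `d - 1` supports, while every support spans a connected subgraph on `d`
vertices and so contains at least `d - 1` edges. Hence `(d - 1) |E| ≥ n (d - 1)`, i.e. `Γ_A` has
at least `n` edges, whereas a tree on `n` vertices has `n - 1`. -/

namespace SimpleGraph

variable {V : Type*} [Fintype V] [DecidableEq V] (G : SimpleGraph V) [DecidableRel G.Adj]

lemma card_le_card_edgeFinset_inter_sym2_add_one {s : Finset V}
    (h : (G.induce (s : Set V)).Connected) : #s ≤ #(G.edgeFinset ∩ s.sym2) + 1 := by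
  calc #s = Nat.card (s : Set V) := by simp
    _ ≤ Nat.card (G.induce (s : Set V)).edgeSet + 1 := h.card_vert_le_card_edgeSet_add_one
    _ = #(G.edgeFinset ∩ s.sym2) + 1 := by
      have := congrArg card (G.map_edgeFinset_induce (s := (s : Set V)))
      rw [card_map, toFinset_coe] at this
      rw [← this, Nat.card_eq_card_toFinset]
      -- the two sides carry different `Fintype` instances on the induced edge set
      congr 2
      ext
      simp

lemma card_le_card_edgeFinset_of_forall_le_card_inter_sym2 {ι : Type*} [Fintype ι]
    (s : ι → Finset V) {k : ℕ} (hk : 0 < k)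
    (hs : ∀ i, k ≤ #(G.edgeFinset ∩ (s i).sym2))
    (he : ∀ e ∈ G.edgeFinset, #{i | e ∈ (s i).sym2} ≤ k) :
    Fintype.card ι ≤ #G.edgeFinset := by
  have := card_mul_le_card_mul (fun i e => e ∈ (s i).sym2) (s := univ) (t := G.edgeFinset)
    (m := k) (n := k) (fun i _ => by rw [bipartiteAbove, filter_mem_eq_inter]; exact hs i)
    (fun e he' => by simpa [bipartiteBelow] using he e he')
  exact le_of_mul_le_mul_right (by simpa using this) hk

end SimpleGraph

instance (n d : ℕ) (A : Fin n → Fin n → Bool) : DecidableRel (gammaA n d A).Adj :=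
  fun j k => inferInstanceAs (Decidable (j ≠ k ∧ _))

lemma card_filter_mem_sym2_eq_of_mem_edgeFinset_gammaA {n d : ℕ} {A : Fin n → Fin n → Bool}
    {e : Sym2 (Fin n)} (he : e ∈ (gammaA n d A).edgeFinset) :
    #{i | e ∈ ({j | A i j} : Finset (Fin n)).sym2} = d - 1 := by
  induction e with
  | _ j k =>
    rw [SimpleGraph.mem_edgeFinset, SimpleGraph.mem_edgeSet] at he
    simpa [Finset.mk_mem_sym2_iff] using he.2

theorem stmt6_general (n d : ℕ) (hd : 2 ≤ d)
    (A : Fin n → Fin n → Bool)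
    (hrow : ∀ i : Fin n, (univ.filter (fun j => A i j)).card = d)
    (hind : ∀ i : Fin n,
      ((gammaA n d A).induce ((univ.filter (fun j => A i j)) : Set (Fin n))).Connected) :
    ¬ (gammaA n d A).IsTree := by
  intro htree
  have hedges := htree.card_edgeFinset
  have hcount := (gammaA n d A).card_le_card_edgeFinset_of_forall_le_card_inter_sym2
    (fun i => {j | A i j}) (k := d - 1) (by omega)
    (fun i => by
      have := (gammaA n d A).card_le_card_edgeFinset_inter_sym2_add_one (hind i)
      have := hrow i
      omega)
    (fun e he => (card_filter_mem_sym2_eq_of_mem_edgeFinset_gammaA he).le)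
  rw [Fintype.card_fin] at hedges hcount
  omega

/-- If every row and every column of an `n × n` 0/1-matrix `A` has exactly `d ≥ 2` ones,
`Γ_A` is connected, and for every row the subgraph of `Γ_A` induced by the support of
that row is connected, then `Γ_A` is not a tree. -/
theorem stmt6 (n d : ℕ) (hd : 2 ≤ d)
    (A : Fin n → Fin n → Bool)
    (hrow : ∀ i : Fin n, (univ.filter (fun j => A i j)).card = d)
    (hcol : ∀ j : Fin n, (univ.filter (fun i => A i j)).card = d)
    (hconn : (gammaA n d A).Connected)
    (hind : ∀ i : Fin n,
      ((gammaA n d A).induce ((univ.filter (fun j => A i j)) : Set (Fin n))).Connected) :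
    ¬ (gammaA n d A).IsTree :=
  stmt6_general n d hd A hrow hind
end

section
/- Let n, d be integers with 1 ≤ d < n and let S ⊆ ℤ/nℤ with |S| = d. Then the number of elements j ∈ ℤ/nℤ with j ∈ S and j + 1 ∈ S is at most d − 1, and equality holds if and only if S is a cyclic interval of length d, i.e., S = {i, i+1, …, i+d−1} for some i ∈ ℤ/nℤ. -/
open Finset

/-- The cyclic interval `{i, i+1, …, i+s-1}` of length `s` in `ZMod n`. -/
def cycInt (n : ℕ) [NeZero n] (i : ZMod n) (s : ℕ) : Finset (ZMod n) :=
  (Finset.range s).image (fun t : ℕ => i + (t : ZMod n))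

lemma mem_cycInt {n : ℕ} [NeZero n] {i x : ZMod n} {s : ℕ} :
    x ∈ cycInt n i s ↔ ∃ t, t < s ∧ x = i + (t : ZMod n) := by
  simp [cycInt, eq_comm, and_comm]

lemma cycInt_card {n : ℕ} [NeZero n] (i : ZMod n) {s : ℕ} (h : s ≤ n) :
    (cycInt n i s).card = s := by
  rw [cycInt, Finset.card_image_of_injOn, Finset.card_range]
  intro a ha b hb hab
  simp only [Finset.coe_range, Set.mem_Iio] at ha hb
  have h1 : ((a : ZMod n)) = (b : ZMod n) := by
    have := hab
    simpa using this
  have := congrArg ZMod.val h1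
  rwa [ZMod.val_natCast_of_lt (by omega), ZMod.val_natCast_of_lt (by omega)] at this

lemma walk_lemma (n d : ℕ) [NeZero n] (hdn : d ≤ n) (S : Finset (ZMod n))
    (hS : S.card = d) (b : ZMod n) (hb : b ∈ S)
    (huniq : ∀ x ∈ S, x - 1 ∉ S → x = b) :
    S = cycInt n b d := by
  have hsub : S ⊆ cycInt n b d := by
    intro x hx
    have hvlt : (x - b).val < n := ZMod.val_lt _
    have key : ∀ j : ℕ, j ≤ (x - b).val → x - (j : ZMod n) ∈ S := by
      intro j
      induction j with
      | zero => intro _; simpa using hx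
      | succ j ih =>
        intro hj
        have h1 : x - (j : ZMod n) ∈ S := ih (by omega)
        have hne : x - (j : ZMod n) ≠ b := by
          intro h
          have h2 : x - b = (j : ZMod n) := by
            rw [sub_eq_iff_eq_add] at h ⊢
            rw [h]; ring
          have h3 : (x - b).val = j := by
            rw [h2, ZMod.val_natCast_of_lt (by omega)]
          omega
        by_contra hnot
        have hform : x - ((j + 1 : ℕ) : ZMod n) = x - (j : ZMod n) - 1 := by
          push_cast; ring
        rw [hform] at hnot
        exact hne (huniq _ h1 hnot)
    set k := (x - b).val with hk
    have hkx : ((k : ℕ) : ZMod n) = x - b := ZMod.natCast_rightInverse (x - b)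
    have hmem : ∀ m ≤ k, b + (m : ZMod n) ∈ S := by
      intro m hm
      have h1 := key (k - m) (Nat.sub_le k m)
      have h2 : x - ((k - m : ℕ) : ZMod n) = b + (m : ZMod n) := by
        rw [Nat.cast_sub hm, hkx]; ring
      rwa [h2] at h1
    have hcard : k + 1 ≤ d := by
      have hsub2 : cycInt n b (k + 1) ⊆ S := by
        intro y hy
        rw [mem_cycInt] at hy
        obtain ⟨t, ht, rfl⟩ := hy
        exact hmem t (by omega)
      have := Finset.card_le_card hsub2
      rw [cycInt_card _ (by omega), hS] at this
      exact this
    rw [mem_cycInt]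
    exact ⟨k, by omega, by rw [hkx]; ring⟩
  exact (Finset.eq_of_subset_of_card_le hsub
    (by rw [cycInt_card _ hdn, hS])).symm ▸ rfl

lemma closure_lemma (n : ℕ) [NeZero n] (S : Finset (ZMod n)) (hne : S.Nonempty)
    (hcl : ∀ j ∈ S, j + 1 ∈ S) : S = univ := by
  obtain ⟨i, hi⟩ := hne
  have key : ∀ t : ℕ, i + (t : ZMod n) ∈ S := by
    intro t
    induction t with
    | zero => simpa using hi
    | succ t ih =>
      have := hcl _ ih
      have hform : i + ((t + 1 : ℕ) : ZMod n) = i + (t : ZMod n) + 1 := by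
        push_cast; ring
      rwa [hform]
  apply Finset.eq_univ_of_forall
  intro y
  have h1 : ((y - i).val : ZMod n) = y - i := ZMod.natCast_rightInverse (y - i)
  have := key (y - i).val
  rwa [h1, add_sub_cancel] at this

/-- For `1 ≤ d < n` and `S ⊆ ZMod n` with `|S| = d`, the number of `j ∈ ZMod n` with
`j ∈ S` and `j + 1 ∈ S` is at most `d - 1`, with equality iff `S` is a cyclic interval
of length `d`. -/
theorem stmt10 (n d : ℕ) [NeZero n] (hd : 1 ≤ d) (hdn : d < n)
    (S : Finset (ZMod n)) (hS : S.card = d) :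
    (univ.filter (fun j : ZMod n => j ∈ S ∧ j + 1 ∈ S)).card ≤ d - 1 ∧
    ((univ.filter (fun j : ZMod n => j ∈ S ∧ j + 1 ∈ S)).card = d - 1 ↔
      ∃ i : ZMod n, S = cycInt n i d) := by
  set T := univ.filter (fun j : ZMod n => j ∈ S ∧ j + 1 ∈ S) with hT
  set A := univ.filter (fun j : ZMod n => j ∈ S ∧ j + 1 ∉ S) with hA
  set B := univ.filter (fun j : ZMod n => j ∈ S ∧ j - 1 ∉ S) with hB
  set C := univ.filter (fun j : ZMod n => j ∉ S ∧ j + 1 ∈ S) with hC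
  -- T and A partition S
  have hTA : T.card + A.card = d := by
    have hdisj : Disjoint T A := by
      rw [Finset.disjoint_left]
      intro a ha ha'
      simp only [hT, hA, mem_filter] at ha ha'
      exact ha'.2.2 ha.2.2
    have hunion : T ∪ A = S := by
      ext j
      simp only [hT, hA, mem_union, mem_filter, mem_univ, true_and]
      tauto
    rw [← hS, ← hunion, Finset.card_union_of_disjoint hdisj]
  -- T and C partition the shifted copy of S
  have hTC : T.card + C.card = d := by
    have hdisj : Disjoint T C := by
      rw [Finset.disjoint_left]
      intro a ha ha'
      simp only [hT, hC, mem_filter] at ha ha'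
      exact ha'.2.1 ha.2.1
    have hunion : T ∪ C = univ.filter (fun j : ZMod n => j + 1 ∈ S) := by
      ext j
      simp only [hT, hC, mem_union, mem_filter, mem_univ, true_and]
      tauto
    have hshift : (univ.filter (fun j : ZMod n => j + 1 ∈ S)).card = d := by
      rw [← hS]
      refine Finset.card_bij' (fun j _ => j + 1) (fun s _ => s - 1) ?_ ?_ ?_ ?_
      · intro a ha; exact (Finset.mem_filter.mp ha).2
      · intro a ha; simp only [mem_filter, mem_univ, true_and]
        simpa using ha
      · intro a _; ring
      · intro a _; ring
    rw [← hshift, ← hunion, Finset.card_union_of_disjoint hdisj]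
  -- C and B are in bijection via j ↦ j + 1
  have hCB : C.card = B.card := by
    refine Finset.card_bij' (fun j _ => j + 1) (fun b _ => b - 1) ?_ ?_ ?_ ?_
    · intro a ha
      simp only [hC, mem_filter, mem_univ, true_and] at ha
      simp only [hB, mem_filter, mem_univ, true_and]
      exact ⟨ha.2, by simpa using ha.1⟩
    · intro a ha
      simp only [hB, mem_filter, mem_univ, true_and] at ha
      simp only [hC, mem_filter, mem_univ, true_and]
      exact ⟨ha.2, by simpa using ha.1⟩
    · intro a _; ring
    · intro a _; ring
  -- A is nonempty
  have hAne : 1 ≤ A.card := by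
    rw [Nat.one_le_iff_ne_zero, Ne, Finset.card_eq_zero]
    intro hAe
    have hcl : ∀ j ∈ S, j + 1 ∈ S := by
      intro j hj
      by_contra hnot
      have : j ∈ A := by simp [hA, hj, hnot]
      simp [hAe] at this
    have hne : S.Nonempty := Finset.card_pos.mp (by omega)
    have := closure_lemma n S hne hcl
    rw [this, Finset.card_univ, ZMod.card] at hS
    omega
  refine ⟨by omega, ?_⟩
  constructor
  · intro hcard
    have hB1 : B.card = 1 := by omega
    obtain ⟨b, hb⟩ := Finset.card_eq_one.mp hB1
    have hbmem : b ∈ B := by rw [hb]; exact Finset.mem_singleton_self b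
    simp only [hB, mem_filter] at hbmem
    refine ⟨b, walk_lemma n d (by omega) S hS b hbmem.2.1 ?_⟩
    intro x hx hx1
    have : x ∈ B := by simp [hB, hx, hx1]
    rw [hb, Finset.mem_singleton] at this
    exact this
  · rintro ⟨i, rfl⟩
    have hSc : (cycInt n i d).card = d := cycInt_card i (by omega)
    have hBi : B = {i} := by
      ext b
      simp only [hB, mem_filter, mem_univ, true_and, Finset.mem_singleton]
      constructor
      · rintro ⟨hbS, hb1⟩
        rw [mem_cycInt] at hbS
        obtain ⟨t, ht, rfl⟩ := hbS
        rcases Nat.eq_zero_or_pos t with h0 | h0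
        · subst h0; simp
        · exfalso
          apply hb1
          rw [mem_cycInt]
          refine ⟨t - 1, by omega, ?_⟩
          have : ((t : ℕ) : ZMod n) = ((t - 1 : ℕ) : ZMod n) + 1 := by
            rw [Nat.cast_sub (by omega)]; push_cast; ring
          rw [this]; ring
      · rintro rfl
        constructor
        · rw [mem_cycInt]; exact ⟨0, by omega, by simp⟩
        · rw [mem_cycInt]
          rintro ⟨t, ht, hteq⟩
          have h1 : ((t + 1 : ℕ) : ZMod n) = 0 := by
            push_cast
            rw [sub_eq_iff_eq_add] at hteq
            linear_combination -hteq
          rw [ZMod.natCast_eq_zero_iff] at h1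
          have := Nat.le_of_dvd (by omega) h1
          omega
    have : B.card = 1 := by rw [hBi]; simp
    omega
end

section
/- Let n, d be integers with 2 ≤ d < n and let A be an n × n matrix with entries in {0,1}, with rows and columns indexed by ℤ/nℤ, such that every row of A has exactly d ones. Assume that for every j ∈ ℤ/nℤ, the columns j and j + 1 of A have exactly d − 1 common ones (i.e., the number of rows i with A_{i,j} = A_{i,j+1} = 1 equals d − 1). Then for every row i, the support of row i is a cyclic interval of length d in ℤ/nℤ. -/
/-!
Call `j` an adjacent pair of `S ⊆ ℤ/nℤ` if `j, j + 1 ∈ S`. A proper nonempty `S` has a point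
`a` with `a - 1 ∉ S`, and `j ↦ j + 1` injects the adjacent pairs into `S \ {a}`. So `S` has at
most `|S| - 1` adjacent pairs, with equality only when every point of `S` other than `a` has its
predecessor in `S`, i.e. when `S` is the interval starting at `a`. Counting the pairs `(i, j)`
with `A i j = A i (j + 1) = 1` by columns gives `n (d - 1)`, so every row attains the bound.
-/

open Finset

namespace ZMod

variable {n : ℕ}

def adjPairs (S : Finset (ZMod n)) : Finset (ZMod n) :=
  S.filter (fun j => j + 1 ∈ S)

lemma natCast_ne_zero_of_pos_of_lt {t : ℕ} (h0 : 0 < t) (hn : t < n) : (t : ZMod n) ≠ 0 := by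
  rw [Ne, natCast_eq_zero_iff]
  exact Nat.not_dvd_of_pos_of_lt h0 hn

lemma card_cycInt [NeZero n] (a : ZMod n) {s : ℕ} (hs : s ≤ n) : #(cycInt n a s) = s := by
  rw [cycInt, card_image_of_injOn, card_range]
  intro x hx y hy hxy
  simp only [coe_range, Set.mem_Iio] at hx hy
  have hcast : (x : ZMod n) = y := add_left_cancel hxy
  rw [← val_cast_of_lt (hx.trans_le hs), ← val_cast_of_lt (hy.trans_le hs), hcast]

lemma exists_mem_sub_one_notMem [NeZero n] {S : Finset (ZMod n)} (hne : S.Nonempty)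
    (hS : S ≠ univ) : ∃ a ∈ S, a - 1 ∉ S := by
  by_contra! hpred
  obtain ⟨s, hs⟩ := hne
  have hsub : ∀ k : ℕ, s - k ∈ S := by
    intro k
    induction k with
    | zero => simpa using hs
    | succ k ih => simpa [sub_add_eq_sub_sub] using hpred _ ih
  refine hS (eq_univ_of_forall fun y => ?_)
  simpa [natCast_zmod_val] using hsub (s - y).val

lemma image_adjPairs_subset_erase {S : Finset (ZMod n)} {a : ZMod n} (ha : a - 1 ∉ S) :
    (adjPairs S).image (· + 1) ⊆ S.erase a := by
  intro y hy
  obtain ⟨j, hj, rfl⟩ := mem_image.mp hy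
  rw [adjPairs, mem_filter] at hj
  refine mem_erase.mpr ⟨fun h => ha ?_, hj.2⟩
  rw [← h, add_sub_cancel_right]
  exact hj.1

lemma card_adjPairs_le [NeZero n] {S : Finset (ZMod n)} (hS : S ≠ univ) :
    #(adjPairs S) ≤ #S - 1 := by
  rcases S.eq_empty_or_nonempty with rfl | hne
  · simp [adjPairs]
  obtain ⟨a, haS, ha⟩ := exists_mem_sub_one_notMem hne hS
  calc #(adjPairs S) = #((adjPairs S).image (· + 1)) :=
        (card_image_of_injective _ (add_left_injective 1)).symm
    _ ≤ #(S.erase a) := card_le_card (image_adjPairs_subset_erase ha)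
    _ = #S - 1 := card_erase_of_mem haS

lemma eq_cycInt_of_sub_one_mem [NeZero n] {S : Finset (ZMod n)} {a : ZMod n}
    (hpred : ∀ s ∈ S, s ≠ a → s - 1 ∈ S) : S = cycInt n a #S := by
  have hSn : #S ≤ n := (card_le_univ S).trans_eq (card n)
  refine eq_of_subset_of_card_le (fun s hs => ?_) (card_cycInt a hSn).le
  set k := (s - a).val
  have hk : a + k = s := by rw [natCast_zmod_val, add_sub_cancel]
  have hdown : ∀ j ≤ k, a + j ∈ S := by
    intro j hj
    refine Nat.decreasingInduction (motive := fun j _ => a + j ∈ S) (fun j hjk hmem => ?_)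
      (hk ▸ hs) hj
    have hne : a + ((j + 1 : ℕ) : ZMod n) ≠ a := fun h =>
      natCast_ne_zero_of_pos_of_lt j.succ_pos ((Nat.succ_le_of_lt hjk).trans_lt (val_lt _))
        (by simpa using h)
    simpa [add_sub_assoc] using hpred _ hmem hne
  have hsub : cycInt n a (k + 1) ⊆ S := by
    intro y hy
    obtain ⟨j, hj, rfl⟩ := mem_image.mp hy
    exact hdown j (Nat.lt_succ_iff.mp (mem_range.mp hj))
  have hkS : k + 1 ≤ #S := by
    simpa only [card_cycInt a (s := k + 1) (val_lt _)] using card_le_card hsub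
  exact mem_image.mpr ⟨k, mem_range.mpr hkS, hk⟩

lemma exists_eq_cycInt_of_card_adjPairs [NeZero n] {S : Finset (ZMod n)} (hS : S ≠ univ)
    (h : #(adjPairs S) = #S - 1) : ∃ a, S = cycInt n a #S := by
  rcases S.eq_empty_or_nonempty with rfl | hne
  · exact ⟨0, by simp [cycInt]⟩
  obtain ⟨a, haS, ha⟩ := exists_mem_sub_one_notMem hne hS
  have himage : (adjPairs S).image (· + 1) = S.erase a := by
    refine eq_of_subset_of_card_le (image_adjPairs_subset_erase ha) ?_
    rw [card_image_of_injective _ (add_left_injective 1), h, card_erase_of_mem haS]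
  refine ⟨a, eq_cycInt_of_sub_one_mem fun s hs hsa => ?_⟩
  obtain ⟨j, hj, rfl⟩ := mem_image.mp (himage ▸ mem_erase.mpr ⟨hsa, hs⟩)
  simpa [adjPairs] using (mem_filter.mp hj).1

end ZMod

theorem stmt11_general (n d : ℕ) [NeZero n] (hdn : d < n)
    (A : ZMod n → ZMod n → Bool)
    (hrow : ∀ i : ZMod n, (univ.filter (fun j => A i j)).card = d)
    (hadj : ∀ j : ZMod n,
      (univ.filter (fun i => A i j ∧ A i (j + 1))).card = d - 1) :
    ∀ i : ZMod n, ∃ a : ZMod n, univ.filter (fun j => A i j) = cycInt n a d := by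
  set S : ZMod n → Finset (ZMod n) := fun i => univ.filter (fun j => A i j)
  have hproper (i : ZMod n) : S i ≠ univ := fun h => hdn.ne <| by
    rw [← hrow i, (card_eq_iff_eq_univ _).mpr h, ZMod.card]
  have hbound : ∀ i ∈ univ, #(ZMod.adjPairs (S i)) ≤ d - 1 := fun i _ =>
    hrow i ▸ ZMod.card_adjPairs_le (hproper i)
  have hcount : ∑ i, #(ZMod.adjPairs (S i)) = ∑ _i : ZMod n, (d - 1) := by
    have hpairs (i : ZMod n) :
        ZMod.adjPairs (S i) = univ.filter (fun j => A i j ∧ A i (j + 1)) := by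
      ext j; simp [S, ZMod.adjPairs]
    simp only [hpairs, card_filter]
    rw [sum_comm]
    simp only [← card_filter, hadj]
  have hequal := (sum_eq_sum_iff_of_le hbound).mp hcount
  intro i
  obtain ⟨a, ha⟩ :=
    ZMod.exists_eq_cycInt_of_card_adjPairs (hproper i) (hrow i ▸ hequal i (mem_univ i))
  exact ⟨a, hrow i ▸ ha⟩

/-- Let `2 ≤ d < n` and let `A` be an `n × n` 0/1-matrix indexed by `ZMod n` whose rows
all have exactly `d` ones, such that for every `j` the columns `j` and `j + 1` have
exactly `d - 1` common ones. Then every row's support is a cyclic interval of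
length `d` in `ZMod n`. -/
theorem stmt11 (n d : ℕ) [NeZero n] (hd : 2 ≤ d) (hdn : d < n)
    (A : ZMod n → ZMod n → Bool)
    (hrow : ∀ i : ZMod n, (univ.filter (fun j => A i j)).card = d)
    (hadj : ∀ j : ZMod n,
      (univ.filter (fun i => A i j ∧ A i (j + 1))).card = d - 1) :
    ∀ i : ZMod n, ∃ a : ZMod n, univ.filter (fun j => A i j) = cycInt n a d :=
  stmt11_general n d hdn A hrow hadj
end

section
/- Let n, d be integers with 2 ≤ d < n and let A be an n × n matrix with entries in {0,1}, with rows and columns indexed by ℤ/nℤ, such that every row of A has exactly d ones, no two distinct rows of A are equal, and for every j ∈ ℤ/nℤ the columns j and j + 1 of A have exactly d − 1 common ones (i.e., the number of rows i with A_{i,j} = A_{i,j+1} = 1 equals d − 1). Then there is a permutation σ of ℤ/nℤ such that A_{σ(i), j} = m_{ij} for all i, j ∈ ℤ/nℤ, where m_{ij} are the entries of the (n,d)-circulant M(n,d); i.e., A can be transformed into M(n,d) by a permutation of its rows. -/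
open Finset

lemma step_all (n : ℕ) [NeZero n] (S : Finset (ZMod n)) (b : ZMod n)
    (hstep : ∀ x ∈ S, x ≠ b → x + 1 ∈ S) (x : ZMod n) (hx : x ∈ S) :
    ∀ t : ℕ, t ≤ (b - x).val → x + (t : ZMod n) ∈ S := by
  intro t
  induction t with
  | zero => intro _; simpa using hx
  | succ t ih =>
    intro ht
    have ht' : t ≤ (b - x).val := le_of_lt (Nat.lt_of_succ_le ht)
    have hmem : x + (t : ZMod n) ∈ S := ih ht'
    have hne : x + (t : ZMod n) ≠ b := by
      intro h
      have : b - x = (t : ZMod n) := by rw [← h]; ring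
      have hv : (b - x).val = t % n := by rw [this, ZMod.val_natCast]
      have := Nat.mod_le t n
      omega
    have := hstep _ hmem hne
    push_cast
    convert this using 1
    ring

lemma mem_bound (n d : ℕ) [NeZero n] (S : Finset (ZMod n)) (b : ZMod n)
    (hS : S.card = d)
    (hstep : ∀ x ∈ S, x ≠ b → x + 1 ∈ S) (x : ZMod n) (hx : x ∈ S) :
    (b - x).val < d := by
  have hmap : ∀ t ∈ Finset.range ((b - x).val + 1), x + (t : ZMod n) ∈ S := by
    intro t ht
    exact step_all n S b hstep x hx t (by simpa using Nat.lt_succ_iff.mp (Finset.mem_range.mp ht))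
  have hinj : Set.InjOn (fun t : ℕ => x + (t : ZMod n)) (Finset.range ((b - x).val + 1)) := by
    intro t₁ h₁ t₂ h₂ h
    simp only [Finset.coe_range, Set.mem_Iio] at h₁ h₂
    have hlt : (b - x).val < n := ZMod.val_lt _
    have : (t₁ : ZMod n) = (t₂ : ZMod n) := by
      have := add_left_cancel h
      exact this
    have := congrArg ZMod.val this
    rw [ZMod.val_natCast, ZMod.val_natCast] at this
    rw [Nat.mod_eq_of_lt (by omega), Nat.mod_eq_of_lt (by omega)] at this
    exact this
  have := Finset.card_le_card_of_injOn _ hmap hinj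
  simp only [Finset.card_range] at this
  omega

lemma card_interval (n d : ℕ) [NeZero n] (hdn : d ≤ n) (b : ZMod n) :
    (univ.filter (fun x : ZMod n => (b - x).val < d)).card = d := by
  have himg : univ.filter (fun x : ZMod n => (b - x).val < d)
      = (Finset.range d).image (fun k : ℕ => b - (k : ZMod n)) := by
    ext x
    simp only [Finset.mem_filter, Finset.mem_univ, true_and, Finset.mem_image,
      Finset.mem_range]
    constructor
    · intro hx
      exact ⟨(b - x).val, hx, by rw [ZMod.natCast_val, ZMod.cast_id]; ring⟩
    · rintro ⟨k, hk, rfl⟩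
      have : b - (b - (k : ZMod n)) = (k : ZMod n) := by ring
      rw [this, ZMod.val_natCast, Nat.mod_eq_of_lt (by omega)]
      exact hk
  rw [himg, Finset.card_image_of_injOn, Finset.card_range]
  intro k₁ h₁ k₂ h₂ h
  simp only [Finset.coe_range, Set.mem_Iio] at h₁ h₂
  have : (k₁ : ZMod n) = (k₂ : ZMod n) := by
    linear_combination -h
  have := congrArg ZMod.val this
  rwa [ZMod.val_natCast, ZMod.val_natCast, Nat.mod_eq_of_lt (by omega),
    Nat.mod_eq_of_lt (by omega)] at this

lemma val_swap (n d : ℕ) [NeZero n] (hd : 1 ≤ d) (hdn : d < n) (u v : ZMod n)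
    (huv : u + v = ((d - 1 : ℕ) : ZMod n)) (hu : u.val < d) : v.val < d := by
  have hv : v = ((d - 1 - u.val : ℕ) : ZMod n) := by
    have h1 : ((d - 1 - u.val : ℕ) : ZMod n) + ((u.val : ℕ) : ZMod n) = ((d - 1 : ℕ) : ZMod n) := by
      rw [← Nat.cast_add]
      congr 1
      omega
    rw [ZMod.natCast_val, ZMod.cast_id] at h1
    have : v = ((d - 1 : ℕ) : ZMod n) - u := by rw [← huv]; ring
    rw [this, ← h1]; ring
  rw [hv, ZMod.val_natCast, Nat.mod_eq_of_lt (by omega)]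
  omega

/-- The `(n,d)`-circulant matrix `M(n,d)` with rows and columns indexed by `ZMod n`
(encoded with `Bool` entries): the entry at `(i, j)` is `1` iff
`j ∈ {i, i+1, …, i+d-1}` (indices mod `n`). -/
def Mcirc (n d : ℕ) [NeZero n] (i j : ZMod n) : Bool := decide ((j - i).val < d)

/-- Let `2 ≤ d < n` and let `A` be an `n × n` 0/1-matrix indexed by `ZMod n` whose rows
all have exactly `d` ones, with no two distinct rows equal, such that for every `j` the
columns `j` and `j + 1` have exactly `d - 1` common ones. Then `A` can be transformed
into the circulant `M(n,d)` by a permutation of its rows. -/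
theorem stmt12 (n d : ℕ) [NeZero n] (hd : 2 ≤ d) (hdn : d < n)
    (A : ZMod n → ZMod n → Bool)
    (hrow : ∀ i : ZMod n, (univ.filter (fun j => A i j)).card = d)
    (hdist : ∀ i₁ i₂ : ZMod n, (∀ j, A i₁ j = A i₂ j) → i₁ = i₂)
    (hadj : ∀ j : ZMod n,
      (univ.filter (fun i => A i j ∧ A i (j + 1))).card = d - 1) :
    ∃ σ : Equiv.Perm (ZMod n), ∀ i j : ZMod n, A (σ i) j = Mcirc n d i j := by
  classical
  set S : ZMod n → Finset (ZMod n) := fun i => univ.filter (fun j => A i j) with hSdef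
  have hScard : ∀ i, (S i).card = d := hrow
  have hTeq : ∀ i, univ.filter (fun j => A i j ∧ A i (j + 1))
      = (S i).filter (fun j => A i (j + 1)) := by
    intro i; ext j; simp [hSdef, and_assoc]
  -- Step 1: upper bound
  have hle : ∀ i, (univ.filter (fun j => A i j ∧ A i (j + 1))).card ≤ d - 1 := by
    intro i
    by_cases hall : ∀ j ∈ S i, A i (j + 1) = true
    · exfalso
      have hne_univ : S i ≠ univ := by
        intro h
        have := hScard i
        rw [h, Finset.card_univ, ZMod.card] at this
        omega
      obtain ⟨c, hc⟩ : ∃ c, c ∉ S i := by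
        by_contra h
        push_neg at h
        exact hne_univ (Finset.eq_univ_iff_forall.mpr h)
      have hstep : ∀ x ∈ S i, x ≠ c → x + 1 ∈ S i := by
        intro x hx _
        simp only [hSdef, Finset.mem_filter, Finset.mem_univ, true_and]
        exact hall x hx
      obtain ⟨x, hx⟩ : (S i).Nonempty := by
        rw [← Finset.card_pos, hScard i]; omega
      have := step_all n (S i) c hstep x hx (c - x).val le_rfl
      rw [ZMod.natCast_val, ZMod.cast_id] at this
      simp only [add_sub_cancel] at this
      exact hc this
    · push_neg at hall
      obtain ⟨j₀, hj₀S, hj₀⟩ := hall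
      have hsub : univ.filter (fun j => A i j ∧ A i (j + 1)) ⊆ (S i).erase j₀ := by
        intro j hj
        simp only [Finset.mem_filter, Finset.mem_univ, true_and] at hj
        refine Finset.mem_erase.mpr ⟨?_, ?_⟩
        · rintro rfl; exact hj₀ hj.2
        · simp only [hSdef, Finset.mem_filter, Finset.mem_univ, true_and]; exact hj.1
      have := Finset.card_le_card hsub
      rwa [Finset.card_erase_of_mem hj₀S, hScard i] at this
  -- Step 2: sum identity
  have hsum : ∑ i : ZMod n, (univ.filter (fun j => A i j ∧ A i (j + 1))).card
      = n * (d - 1) := by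
    calc ∑ i : ZMod n, (univ.filter (fun j => A i j ∧ A i (j + 1))).card
        = ∑ i : ZMod n, ∑ j : ZMod n, (if A i j ∧ A i (j + 1) then 1 else 0) := by
          refine Finset.sum_congr rfl fun i _ => ?_
          rw [Finset.card_filter]
      _ = ∑ j : ZMod n, ∑ i : ZMod n, (if A i j ∧ A i (j + 1) then 1 else 0) :=
          Finset.sum_comm
      _ = ∑ _j : ZMod n, (d - 1) := by
          refine Finset.sum_congr rfl fun j _ => ?_
          rw [← Finset.card_filter]
          exact hadj j
      _ = n * (d - 1) := by
          simp [Finset.card_univ, ZMod.card]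
  -- Step 3: equality
  have hceq : ∀ i, (univ.filter (fun j => A i j ∧ A i (j + 1))).card = d - 1 := by
    intro i₀
    by_contra hne
    have hlt : (univ.filter (fun j => A i₀ j ∧ A i₀ (j + 1))).card < d - 1 :=
      lt_of_le_of_ne (hle i₀) hne
    have hstrict : ∑ i : ZMod n, (univ.filter (fun j => A i j ∧ A i (j + 1))).card
        < ∑ _i : ZMod n, (d - 1) :=
      Finset.sum_lt_sum (fun i _ => hle i) ⟨i₀, Finset.mem_univ _, hlt⟩
    rw [hsum] at hstrict
    simp [Finset.card_univ, ZMod.card] at hstrict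
  -- Step 4: each row is an interval
  have hb : ∀ i, ∃ b : ZMod n, ∀ j, (A i j = true) ↔ (b - j).val < d := by
    intro i
    have hsplit := Finset.card_filter_add_card_filter_not
      (s := S i) (p := fun j => A i (j + 1) = true)
    have hTcard : ((S i).filter (fun j => A i (j + 1))).card = d - 1 := by
      rw [← hTeq]; exact hceq i
    rw [hTcard, hScard i] at hsplit
    have hEcard : ((S i).filter (fun j => ¬ A i (j + 1) = true)).card = 1 := by omega
    obtain ⟨b, hEb⟩ := Finset.card_eq_one.mp hEcard
    have hbS : b ∈ S i := by
      have : b ∈ (S i).filter (fun j => ¬ A i (j + 1) = true) := by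
        rw [hEb]; exact Finset.mem_singleton_self b
      exact (Finset.mem_filter.mp this).1
    have hstep : ∀ x ∈ S i, x ≠ b → x + 1 ∈ S i := by
      intro x hx hxb
      have hxE : x ∉ (S i).filter (fun j => ¬ A i (j + 1) = true) := by
        rw [hEb]; simpa using hxb
      rw [Finset.mem_filter] at hxE
      push_neg at hxE
      have := hxE hx
      simp only [hSdef, Finset.mem_filter, Finset.mem_univ, true_and]
      simpa using this
    have hbd : ∀ x ∈ S i, (b - x).val < d :=
      fun x hx => mem_bound n d (S i) b (hScard i) hstep x hx
    have hsub : S i ⊆ univ.filter (fun x : ZMod n => (b - x).val < d) := by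
      intro x hx
      simp only [Finset.mem_filter, Finset.mem_univ, true_and]
      exact hbd x hx
    have hSeq : S i = univ.filter (fun x : ZMod n => (b - x).val < d) :=
      Finset.eq_of_subset_of_card_le hsub
        (by rw [card_interval n d (le_of_lt hdn) b, hScard i])
    refine ⟨b, fun j => ?_⟩
    constructor
    · intro hAj
      have : j ∈ S i := by
        simp only [hSdef, Finset.mem_filter, Finset.mem_univ, true_and]; exact hAj
      rw [hSeq] at this
      simpa using this
    · intro hlt
      have : j ∈ S i := by
        rw [hSeq]; simp [hlt]
      simpa [hSdef] using this
  choose b hbA using hb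
  -- Step 5: build the permutation
  set g : ZMod n → ZMod n := fun i => b i - ((d - 1 : ℕ) : ZMod n) with hgdef
  have hginj : Function.Injective g := by
    intro i₁ i₂ h
    have hbb : b i₁ = b i₂ := by
      have := congrArg (· + ((d - 1 : ℕ) : ZMod n)) h
      simpa [hgdef, sub_add_cancel] using this
    apply hdist
    intro j
    have h1 := hbA i₁ j
    have h2 := hbA i₂ j
    rw [hbb] at h1
    rw [Bool.eq_iff_iff]
    exact h1.trans h2.symm
  have hgbij : Function.Bijective g := Finite.injective_iff_bijective.mp hginj
  refine ⟨(Equiv.ofBijective g hgbij).symm, fun i j => ?_⟩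
  have hgi : g ((Equiv.ofBijective g hgbij).symm i) = i := by
    exact (Equiv.ofBijective g hgbij).apply_symm_apply i
  set i' := (Equiv.ofBijective g hgbij).symm i with hi'
  have hbσ : b i' = i + ((d - 1 : ℕ) : ZMod n) := by
    have : b i' - ((d - 1 : ℕ) : ZMod n) = i := hgi
    linear_combination this
  have h := hbA i' j
  have hP : (b i' - j).val < d ↔ (j - i).val < d := by
    constructor
    · intro h'
      refine val_swap n d (by omega) hdn (b i' - j) (j - i) ?_ h'
      rw [hbσ]; ring
    · intro h'
      refine val_swap n d (by omega) hdn (j - i) (b i' - j) ?_ h'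
      rw [hbσ]; ring
  unfold Mcirc
  rw [Bool.eq_iff_iff, decide_eq_true_eq]
  exact h.trans hP
end
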